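/- arXiv:math/0502129 — 4 statements merged into one kernel-verified Lean document; each statement's English description precedes it below -/
import Mathlib

section
/- Let T̂ : 𝕋¹×ℝ → 𝕋¹×ℝ be a continuous skew product over an irrational rotation with monotone increasing fibre maps, and let A ⊆ 𝕋¹×ℝ be a minimal set for T̂ (compact, invariant, every orbit dense). Then the set {θ ∈ 𝕋¹ : φ⁺_A(θ) = φ⁻_A(θ)} is residual in 𝕋¹; in particular every minimal set is pinched. -/
/-!
The projection of `A` to the circle is closed and invariant under the irrational rotation,
hence the whole circle; so every fibre is nonempty and compact, and `φ⁺_A` is upper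
semicontinuous.
The fibre maps are monotone and continuous, so they commute with `sSup` and the graph of `φ⁺_A`
is invariant. By minimality `A` is the orbit closure of a point on that graph, hence lies in the
closure of the graph, which over a continuity point `θ` of `φ⁺_A` contains only `(θ, φ⁺_A θ)`:
the fibre over `θ` is a single point. Continuity points of an upper semicontinuous function form
a residual set.
-/

open Set Function Pointwise Topology

theorem IsOpen.isNowhereDense_frontier {X : Type*} [TopologicalSpace X] {s : Set X}
    (hs : IsOpen s) : IsNowhereDense (frontier s) := by
  rw [isClosed_frontier.isNowhereDense_iff, ← frontier_compl]
  exact interior_frontier hs.isClosed_compl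

/-- A real upper semicontinuous function can only jump down at `x` across some rational level
`q`, and then `x` lies on the frontier of the open set `{f < q}`. -/
theorem UpperSemicontinuous.setOf_continuousAt_mem_residual {X : Type*} [TopologicalSpace X]
    {f : X → ℝ} (hf : UpperSemicontinuous f) : {x | ContinuousAt f x} ∈ residual X := by
  have hopen : ∀ q : ℝ, IsOpen {x | f x < q} := upperSemicontinuous_iff_isOpen_preimage.1 hf
  have hcover : {x | ContinuousAt f x}ᶜ ⊆ ⋃ q : ℚ, frontier {x | f x < q} := by
    intro x hx
    have hlower : ¬LowerSemicontinuousAt f x := fun h =>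
      hx (continuousAt_iff_lower_upperSemicontinuousAt.2 ⟨h, hf x⟩)
    simp only [lowerSemicontinuousAt_iff, not_forall, Filter.not_eventually, not_lt] at hlower
    obtain ⟨y, hyx, hfreq⟩ := hlower
    obtain ⟨q, hyq, hqx⟩ := exists_rat_btwn hyx
    refine mem_iUnion.2 ⟨q, ?_⟩
    rw [(hopen q).frontier_eq]
    refine ⟨mem_closure_iff_frequently.2 (hfreq.mono fun x' hx' => hx'.trans_lt hyq), ?_⟩
    exact hqx.not_gt
  have hmeagre : IsMeagre (⋃ q : ℚ, frontier {x | f x < q}) :=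
    isMeagre_iUnion fun q => (hopen q).isNowhereDense_frontier.isMeagre
  simpa only [IsMeagre, compl_compl] using hmeagre.mono hcover

theorem IsClosed.eq_univ_of_vadd_eq_self {G : Type*} [AddGroup G] [TopologicalSpace G]
    [ContinuousAdd G] {P : Set G} (hP : IsClosed P) (hne : P.Nonempty) {g : G}
    (hg : DenseRange (· • g : ℤ → G)) (hinv : g +ᵥ P = P) : P = univ := by
  obtain ⟨x, hx⟩ := hne
  have hstab : g ∈ AddAction.stabilizer G P := hinv
  have horbit : ∀ n : ℤ, n • g + x ∈ P := fun n => by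
    rw [← AddAction.mem_stabilizer_iff.1 (zsmul_mem hstab n)]
    exact vadd_mem_vadd_set hx
  have hdense : DenseRange fun n : ℤ => n • g + x :=
    (Equiv.addRight x).surjective.denseRange.comp hg (continuous_add_const x)
  exact eq_univ_of_univ_subset <|
    hdense.closure_range ▸ closure_minimal (range_subset_iff.2 horbit) hP

theorem eq_of_mem_closure_range_graph {X Y : Type*} [TopologicalSpace X] [TopologicalSpace Y]
    [T2Space Y] {φ : X → Y} {θ : X} {y : Y} (hφ : ContinuousAt φ θ)
    (h : (θ, y) ∈ closure (range fun θ => (θ, φ θ))) : y = φ θ := by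
  have hcont : ContinuousAt (fun p : X × Y => (p.2, φ p.1)) (θ, y) :=
    continuousAt_snd.prodMk (hφ.comp continuousAt_fst)
  have hdiag :
      (fun p : X × Y => (p.2, φ p.1)) '' range (fun θ => (θ, φ θ)) ⊆ diagonal Y := by
    rintro _ ⟨_, ⟨_, rfl⟩, rfl⟩
    rfl
  exact closure_minimal hdiag isClosed_diagonal (mem_closure_image hcont h)

section Fibre

variable {X Y : Type*}

theorem IsCompact.preimage_prodMk [TopologicalSpace X] [TopologicalSpace Y] [T2Space X]
    [T2Space Y] {A : Set (X × Y)} (hA : IsCompact A) (θ : X) : IsCompact (Prod.mk θ ⁻¹' A) :=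
  (hA.image continuous_snd).of_isClosed_subset (hA.isClosed.preimage (.prodMk_right θ))
    fun _ hx => ⟨_, hx, rfl⟩

theorem image_fst_image_of_fst_eq {f : X → X} {T : X × Y → X × Y}
    (hbase : ∀ p, (T p).1 = f p.1) (A : Set (X × Y)) :
    Prod.fst '' (T '' A) = f '' (Prod.fst '' A) := by
  simp only [image_image, hbase]

theorem preimage_prodMk_image_of_fst_eq {f : X → X} (hf : Injective f) {T : X × Y → X × Y}
    (hbase : ∀ p, (T p).1 = f p.1) (A : Set (X × Y)) (θ : X) :
    Prod.mk (f θ) ⁻¹' (T '' A) = (fun y => (T (θ, y)).2) '' (Prod.mk θ ⁻¹' A) := by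
  ext y
  constructor
  · rintro ⟨⟨θ', y'⟩, hp, hTp⟩
    obtain rfl : θ' = θ := hf ((hbase (θ', y')).symm.trans (congrArg Prod.fst hTp))
    exact ⟨y', hp, congrArg Prod.snd hTp⟩
  · rintro ⟨y', hy', rfl⟩
    exact ⟨(θ, y'), hy', Prod.ext (hbase _) rfl⟩

theorem Function.Semiconj.range_iterate_subset_range {Z : Type*} {f : X → X} {T : Z → Z}
    {g : X → Z} (h : Semiconj g f T) (θ : X) : range (fun n : ℕ => T^[n] (g θ)) ⊆ range g :=
  range_subset_iff.2 fun n => mem_range.2 ⟨f^[n] θ, h.iterate_right n θ⟩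

end Fibre

section FibreSup

/-- The paper's `φ⁺_A`. -/
noncomputable def fibreSup {X : Type*} (A : Set (X × ℝ)) (θ : X) : ℝ :=
  sSup (Prod.mk θ ⁻¹' A)

variable {X : Type*} [TopologicalSpace X] [T2Space X] {A : Set (X × ℝ)}

theorem mk_fibreSup_mem (hA : IsCompact A) {θ : X} (hne : (Prod.mk θ ⁻¹' A).Nonempty) :
    (θ, fibreSup A θ) ∈ A :=
  (hA.preimage_prodMk θ).sSup_mem hne

theorem le_fibreSup (hA : IsCompact A) {θ : X} {x : ℝ} (hx : (θ, x) ∈ A) : x ≤ fibreSup A θ :=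
  le_csSup (hA.preimage_prodMk θ).bddAbove hx

theorem upperSemicontinuous_fibreSup (hA : IsCompact A)
    (hne : ∀ θ, (Prod.mk θ ⁻¹' A).Nonempty) : UpperSemicontinuous (fibreSup A) := by
  refine upperSemicontinuous_iff_isClosed_preimage.2 fun r => ?_
  have hsuper : fibreSup A ⁻¹' Ici r = Prod.fst '' (A ∩ Prod.snd ⁻¹' Ici r) := by
    ext θ
    constructor
    · intro hθ
      exact ⟨(θ, fibreSup A θ), ⟨mk_fibreSup_mem hA (hne θ), hθ⟩, rfl⟩
    · rintro ⟨⟨θ, x⟩, ⟨hx, hrx⟩, rfl⟩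
      exact le_trans hrx (le_fibreSup hA hx)
  rw [hsuper]
  exact ((hA.inter_right (isClosed_Ici.preimage continuous_snd)).image
    continuous_fst).isClosed

variable {f : X → X} {T : X × ℝ → X × ℝ}

theorem semiconj_fibreSup (hf : Injective f) (hbase : ∀ p, (T p).1 = f p.1)
    (hcont : Continuous T) (hmono : ∀ θ, Monotone fun x => (T (θ, x)).2)
    (hA : IsCompact A) (hinv : T '' A = A) (hne : ∀ θ, (Prod.mk θ ⁻¹' A).Nonempty) :
    Semiconj (fun θ => (θ, fibreSup A θ)) f T := by
  intro θ
  have hfibre := preimage_prodMk_image_of_fst_eq hf hbase A θ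
  rw [hinv] at hfibre
  have hcontAt : ContinuousAt (fun x => (T (θ, x)).2) (fibreSup A θ) :=
    (hcont.comp (.prodMk_right θ)).snd.continuousAt
  refine Prod.ext (hbase (θ, fibreSup A θ)).symm ?_
  change sSup (Prod.mk (f θ) ⁻¹' A) = (T (θ, sSup (Prod.mk θ ⁻¹' A))).2
  rw [hfibre]
  exact ((hmono θ).map_csSup_of_continuousAt hcontAt (hne θ)
    (hA.preimage_prodMk θ).bddAbove).symm

end FibreSup

/-- every minimal set of a quasiperiodically forced monotone map is pinched:
the set where the two bounding graphs agree is residual. -/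
theorem minimal_set_pinched (ω : ℝ) (hω : Irrational ω)
    (T : AddCircle (1:ℝ) × ℝ → AddCircle (1:ℝ) × ℝ)
    (hcont : Continuous T)
    (hbase : ∀ p : AddCircle (1:ℝ) × ℝ, (T p).1 = p.1 + (ω : AddCircle (1:ℝ)))
    (hmono : ∀ θ : AddCircle (1:ℝ), Monotone fun x : ℝ => (T (θ, x)).2)
    (A : Set (AddCircle (1:ℝ) × ℝ)) (hne : A.Nonempty) (hA : IsCompact A)
    (hinv : T '' A = A)
    (hmin : ∀ p ∈ A, closure (Set.range fun n : ℕ => T^[n] p) = A) :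
    {θ : AddCircle (1:ℝ) |
        sSup {x : ℝ | (θ, x) ∈ A} = sInf {x : ℝ | (θ, x) ∈ A}} ∈
      residual (AddCircle (1:ℝ)) := by
  have hproj : Prod.fst '' A = univ := by
    refine (hA.image continuous_fst).isClosed.eq_univ_of_vadd_eq_self (hne.image _)
      (AddCircle.denseRange_zsmul_coe_iff.2 (by rwa [div_one])) ?_
    calc (ω : AddCircle (1:ℝ)) +ᵥ Prod.fst '' A
          = (· + (ω : AddCircle (1:ℝ))) '' (Prod.fst '' A) := by
          simp only [← image_vadd, vadd_eq_add, add_comm]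
      _ = Prod.fst '' (T '' A) := (image_fst_image_of_fst_eq (f := (· + _)) hbase A).symm
      _ = Prod.fst '' A := by rw [hinv]
  have hfibre : ∀ θ, (Prod.mk θ ⁻¹' A).Nonempty := fun θ => by
    obtain ⟨⟨θ', x⟩, hx, rfl⟩ : θ ∈ Prod.fst '' A := hproj ▸ mem_univ θ
    exact ⟨x, hx⟩
  have hgraph := semiconj_fibreSup (add_left_injective _) hbase hcont hmono hA hinv hfibre
  have hclosure : A ⊆ closure (range fun θ => (θ, fibreSup A θ)) :=
    calc A = closure (range fun n : ℕ => T^[n] (0, fibreSup A 0)) :=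
          (hmin _ (mk_fibreSup_mem hA (hfibre 0))).symm
      _ ⊆ _ := closure_mono (hgraph.range_iterate_subset_range 0)
  filter_upwards [(upperSemicontinuous_fibreSup hA hfibre).setOf_continuousAt_mem_residual]
    with θ hθ
  have hinf := (hA.preimage_prodMk θ).sInf_mem (hfibre θ)
  exact (eq_of_mem_closure_range_graph hθ (hclosure hinf)).symm
end

section
/- Let T̂ be a continuous skew product on 𝕋¹×ℝ over an irrational rotation with monotone increasing fibre maps. If A and B are minimal sets for T̂, then either A ≺ B (i.e. φ⁺_A < φ⁻_B everywhere), or A = B, or B ≺ A. -/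
/-!
Since the fibre maps are monotone, the set of points lying weakly above a compact invariant set
`B` in their fibre is closed and forward invariant, so a minimal set meeting it is contained in it.
Every fibre of a nonempty compact invariant set is nonempty, its projection being a closed
rotation-invariant set. Hence if `A ≺ B` fails, some point of `A` lies weakly above `B`, and then,
`A` and `B` being disjoint, every point of `A` lies strictly above a point of `B` in its fibre. If
`B ≺ A` fails too, the lowest point of a fibre of `A` lies strictly above another point of `A`.
-/

open Set

def IsMinimalSet {α : Type*} [TopologicalSpace α] (T : α → α) (A : Set α) : Prop :=
  ∀ p ∈ A, closure (range fun n : ℕ => T^[n] p) = A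

namespace IsMinimalSet

variable {α : Type*} [TopologicalSpace α] {T : α → α} {A B C : Set α}

theorem subset_of_mem (hA : IsMinimalSet T A) (hC : IsClosed C) (hTC : MapsTo T C C) {p : α}
    (hpA : p ∈ A) (hpC : p ∈ C) : A ⊆ C :=
  hA p hpA ▸ closure_minimal (range_subset_iff.2 fun n => hTC.iterate n hpC) hC

theorem disjoint_of_ne (hA : IsMinimalSet T A) (hB : IsMinimalSet T B) (hAB : A ≠ B) :
    Disjoint A B :=
  disjoint_left.2 fun p hpA hpB => hAB ((hA p hpA).symm.trans (hB p hpB))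

end IsMinimalSet

def fibrewiseUpperClosure {X : Type*} (B : Set (X × ℝ)) : Set (X × ℝ) :=
  {p | ∃ q ∈ B, q.1 = p.1 ∧ q.2 ≤ p.2}

theorem mapsTo_fibrewiseUpperClosure {X : Type*} {T : X × ℝ → X × ℝ} (f : X → X)
    (hbase : ∀ p, (T p).1 = f p.1) (hmono : ∀ θ, Monotone fun x => (T (θ, x)).2)
    {B : Set (X × ℝ)} (hTB : MapsTo T B B) :
    MapsTo T (fibrewiseUpperClosure B) (fibrewiseUpperClosure B) := by
  rintro ⟨θ, x⟩ ⟨⟨θ', y⟩, hqB, rfl, hyx⟩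
  exact ⟨T (θ', y), hTB hqB, by simp only [hbase], hmono θ' hyx⟩

section Fibres

variable {X : Type*} [TopologicalSpace X] [T2Space X]

theorem IsCompact.fibre {A : Set (X × ℝ)} (hA : IsCompact A) (θ : X) :
    IsCompact (Prod.mk θ ⁻¹' A) :=
  (hA.image continuous_snd).of_isClosed_subset (hA.isClosed.preimage (.prodMk_right θ))
    fun x hx => ⟨(θ, x), hx, rfl⟩

theorem IsCompact.isClosed_fibrewiseUpperClosure {B : Set (X × ℝ)}
    (hB : IsCompact B) : IsClosed (fibrewiseUpperClosure B) := by
  have : CompactSpace B := isCompact_iff_compactSpace.1 hB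
  have hS : IsClosed {pq : (X × ℝ) × B | (pq.2 : X × ℝ).1 = pq.1.1 ∧ (pq.2 : X × ℝ).2 ≤ pq.1.2} :=
    (isClosed_eq (by fun_prop) (by fun_prop)).inter
      (isClosed_le (f := fun pq : (X × ℝ) × B => (pq.2 : X × ℝ).2) (by fun_prop) (by fun_prop))
  convert isClosedMap_fst_of_compactSpace _ hS using 1
  ext p
  simp [fibrewiseUpperClosure]

theorem IsMinimalSet.forall_exists_lt_of_exists_le
    {T : X × ℝ → X × ℝ} (f : X → X) (hbase : ∀ p, (T p).1 = f p.1)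
    (hmono : ∀ θ, Monotone fun x => (T (θ, x)).2) {A B : Set (X × ℝ)} (hA : IsMinimalSet T A)
    (hB : IsCompact B) (hTB : MapsTo T B B) (hAB : Disjoint A B)
    (h : ∃ p ∈ A, ∃ q ∈ B, q.1 = p.1 ∧ q.2 ≤ p.2) :
    ∀ p ∈ A, ∃ q ∈ B, q.1 = p.1 ∧ q.2 < p.2 := by
  obtain ⟨p₀, hp₀A, hp₀B⟩ := h
  have hAB' : A ⊆ fibrewiseUpperClosure B :=
    hA.subset_of_mem hB.isClosed_fibrewiseUpperClosure
      (mapsTo_fibrewiseUpperClosure f hbase hmono hTB) hp₀A hp₀B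
  intro p hpA
  obtain ⟨q, hqB, hqp₁, hqp₂⟩ := hAB' hpA
  refine ⟨q, hqB, hqp₁, hqp₂.lt_of_ne fun hqp₂' => ?_⟩
  exact disjoint_left.1 hAB hpA (Prod.ext hqp₁ hqp₂' ▸ hqB)

theorem not_forall_exists_lt_of_forall_exists_lt {A B : Set (X × ℝ)} (hA : IsCompact A)
    (hAne : A.Nonempty) (hAB : ∀ p ∈ A, ∃ q ∈ B, q.1 = p.1 ∧ q.2 < p.2) :
    ¬∀ q ∈ B, ∃ r ∈ A, r.1 = q.1 ∧ r.2 < q.2 := by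
  intro hBA
  obtain ⟨⟨θ, x⟩, hx⟩ := hAne
  have hbot : (θ, sInf (Prod.mk θ ⁻¹' A)) ∈ A := (hA.fibre θ).sInf_mem ⟨x, hx⟩
  obtain ⟨⟨θ', y⟩, hyB, hθ', hy⟩ := hAB _ hbot
  obtain ⟨⟨θ'', z⟩, hzA, hθ'', hz⟩ := hBA _ hyB
  dsimp only at hθ' hy hθ'' hz
  rw [hθ'', hθ'] at hzA
  have : sInf (Prod.mk θ ⁻¹' A) ≤ z := csInf_le (hA.fibre θ).bddBelow hzA
  linarith

end Fibres

theorem eq_univ_of_isClosed_of_image_add_eq {G : Type*} [TopologicalSpace G] [AddGroup G]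
    [ContinuousAdd G] {a : G} (ha : DenseRange (· • a : ℤ → G)) {P : Set G} (hne : P.Nonempty)
    (hP : IsClosed P) (hPa : (· + a) '' P = P) : P = univ := by
  obtain ⟨θ, hθ⟩ := hne
  have hstep : ∀ x, x + a ∈ P ↔ x ∈ P := fun x =>
    ⟨fun hx => by
      obtain ⟨y, hy, hyx⟩ := hPa.symm ▸ hx
      exact add_right_cancel hyx ▸ hy,
     fun hx => hPa ▸ mem_image_of_mem _ hx⟩
  have horbit : ∀ k : ℤ, θ + k • a ∈ P := by
    intro k
    induction k using Int.induction_on with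
    | zero => simpa using hθ
    | succ k ih => rwa [add_zsmul, one_zsmul, ← add_assoc, hstep]
    | pred k ih =>
      rwa [← hstep, show θ + (-(k : ℤ) - 1) • a + a = θ + -(k : ℤ) • a by
        rw [sub_zsmul, one_zsmul, ← add_assoc, neg_add_cancel_right]]
  have hdense : DenseRange fun k : ℤ => θ + k • a :=
    (add_left_surjective θ).denseRange.comp ha (continuous_const_add θ)
  exact eq_univ_of_univ_subset <|
    hdense.closure_range ▸ closure_minimal (range_subset_iff.2 horbit) hP

theorem fibre_nonempty_of_image_eq {G Y : Type*} [TopologicalSpace G] [AddGroup G]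
    [ContinuousAdd G] [T2Space G] [TopologicalSpace Y] {a : G} (ha : DenseRange (· • a : ℤ → G))
    {T : G × Y → G × Y} (hbase : ∀ p, (T p).1 = p.1 + a) {A : Set (G × Y)} (hAne : A.Nonempty)
    (hA : IsCompact A) (hTA : T '' A = A) (θ : G) : (Prod.mk θ ⁻¹' A).Nonempty := by
  have hproj : Prod.fst '' A = univ := by
    refine eq_univ_of_isClosed_of_image_add_eq ha (hAne.image _)
      (hA.image continuous_fst).isClosed ?_
    conv_rhs => rw [← hTA]
    simp only [image_image, hbase]
  obtain ⟨⟨_, y⟩, hyA, rfl⟩ := hproj.symm ▸ mem_univ θ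
  exact ⟨y, hyA⟩

theorem minimal_sets_ordered_general (ω : ℝ) (hω : Irrational ω)
    (T : AddCircle (1:ℝ) × ℝ → AddCircle (1:ℝ) × ℝ)
    (hbase : ∀ p : AddCircle (1:ℝ) × ℝ, (T p).1 = p.1 + (ω : AddCircle (1:ℝ)))
    (hmono : ∀ θ : AddCircle (1:ℝ), Monotone fun x : ℝ => (T (θ, x)).2)
    (A B : Set (AddCircle (1:ℝ) × ℝ))
    (hAne : A.Nonempty) (hAc : IsCompact A) (hAinv : T '' A = A)
    (hAmin : ∀ p ∈ A, closure (Set.range fun n : ℕ => T^[n] p) = A)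
    (hBne : B.Nonempty) (hBc : IsCompact B) (hBinv : T '' B = B)
    (hBmin : ∀ p ∈ B, closure (Set.range fun n : ℕ => T^[n] p) = B) :
    (∀ θ : AddCircle (1:ℝ), sSup {x : ℝ | (θ, x) ∈ A} < sInf {x : ℝ | (θ, x) ∈ B}) ∨
    A = B ∨
    (∀ θ : AddCircle (1:ℝ), sSup {x : ℝ | (θ, x) ∈ B} < sInf {x : ℝ | (θ, x) ∈ A}) := by
  have hrot : DenseRange (· • (ω : AddCircle (1:ℝ)) : ℤ → AddCircle (1:ℝ)) :=
    AddCircle.denseRange_zsmul_coe_iff.2 (by rwa [div_one])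
  have hAfib := fibre_nonempty_of_image_eq hrot hbase hAne hAc hAinv
  have hBfib := fibre_nonempty_of_image_eq hrot hbase hBne hBc hBinv
  by_contra! h
  obtain ⟨⟨θ₀, hθ₀⟩, hAB, θ₁, hθ₁⟩ := h
  have hdisj : Disjoint A B := IsMinimalSet.disjoint_of_ne hAmin hBmin hAB
  have hA_above : ∀ p ∈ A, ∃ q ∈ B, q.1 = p.1 ∧ q.2 < p.2 :=
    IsMinimalSet.forall_exists_lt_of_exists_le _ hbase hmono hAmin hBc
      ((mapsTo_image T B).mono_right hBinv.subset) hdisj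
      ⟨_, (hAc.fibre θ₀).sSup_mem (hAfib θ₀), _, (hBc.fibre θ₀).sInf_mem (hBfib θ₀), rfl, hθ₀⟩
  have hB_above : ∀ q ∈ B, ∃ r ∈ A, r.1 = q.1 ∧ r.2 < q.2 :=
    IsMinimalSet.forall_exists_lt_of_exists_le _ hbase hmono hBmin hAc
      ((mapsTo_image T A).mono_right hAinv.subset) hdisj.symm
      ⟨_, (hBc.fibre θ₁).sSup_mem (hBfib θ₁), _, (hAc.fibre θ₁).sInf_mem (hAfib θ₁), rfl, hθ₁⟩
  exact not_forall_exists_lt_of_forall_exists_lt hAc hAne hA_above hB_above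

/-- two minimal sets of a quasiperiodically forced monotone map are either
equal or strictly ordered. -/
theorem minimal_sets_ordered (ω : ℝ) (hω : Irrational ω)
    (T : AddCircle (1:ℝ) × ℝ → AddCircle (1:ℝ) × ℝ)
    (hcont : Continuous T)
    (hbase : ∀ p : AddCircle (1:ℝ) × ℝ, (T p).1 = p.1 + (ω : AddCircle (1:ℝ)))
    (hmono : ∀ θ : AddCircle (1:ℝ), Monotone fun x : ℝ => (T (θ, x)).2)
    (A B : Set (AddCircle (1:ℝ) × ℝ))
    (hAne : A.Nonempty) (hAc : IsCompact A) (hAinv : T '' A = A)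
    (hAmin : ∀ p ∈ A, closure (Set.range fun n : ℕ => T^[n] p) = A)
    (hBne : B.Nonempty) (hBc : IsCompact B) (hBinv : T '' B = B)
    (hBmin : ∀ p ∈ B, closure (Set.range fun n : ℕ => T^[n] p) = B) :
    (∀ θ : AddCircle (1:ℝ), sSup {x : ℝ | (θ, x) ∈ A} < sInf {x : ℝ | (θ, x) ∈ B}) ∨
    A = B ∨
    (∀ θ : AddCircle (1:ℝ), sSup {x : ℝ | (θ, x) ∈ B} < sInf {x : ℝ | (θ, x) ∈ A}) :=
  minimal_sets_ordered_general ω hω T hbase hmono A B hAne hAc hAinv hAmin hBne hBc hBinv hBmin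
end

section
/- Let T ∈ 𝒯_hom with lift T̂ and fibrewise rotation number ρ. If there exists one orbit (θ₀,x̂₀) and a constant C with |T̂_{θ₀}ⁿ(x̂₀) − x̂₀ − nρ| ≤ C for all n ∈ ℕ, then every orbit is ρ-bounded, and the bound can be chosen uniformly: there exists C' with |T̂_θⁿ(x̂) − x̂ − nρ| ≤ C' for all n ∈ ℕ and all (θ,x̂) ∈ 𝕋¹ × ℝ. -/
open Set Filter Topology

noncomputable section

/-- The fibre maps of the iterates of the lifted skew product:
`fibIter F ω θ n x = T̂ⁿ_θ(x̂)`. -/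
def fibIter (F : ℝ → ℝ → ℝ) (ω : ℝ) (θ : ℝ) : ℕ → ℝ → ℝ
  | 0, x => x
  | n + 1, x => F (θ + n * ω) (fibIter F ω θ n x)

section aux

variable {F : ℝ → ℝ → ℝ} {ω : ℝ}

lemma fibIter_theta_one (hFθ : ∀ θ x : ℝ, F (θ + 1) x = F θ x) :
    ∀ (n : ℕ) (θ x : ℝ), fibIter F ω (θ + 1) n x = fibIter F ω θ n x := by
  intro n
  induction n with
  | zero => intro θ x; rfl
  | succ n ih =>
    intro θ x
    show F (θ + 1 + n * ω) (fibIter F ω (θ + 1) n x) = F (θ + n * ω) (fibIter F ω θ n x)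
    rw [ih, show θ + 1 + (n:ℝ) * ω = (θ + n * ω) + 1 by ring, hFθ]

lemma fibIter_theta_int (hFθ : ∀ θ x : ℝ, F (θ + 1) x = F θ x)
    (n : ℕ) (θ x : ℝ) (k : ℤ) : fibIter F ω (θ + k) n x = fibIter F ω θ n x := by
  have hper : Function.Periodic (fun θ => fibIter F ω θ n x) 1 := fun θ =>
    fibIter_theta_one (ω := ω) hFθ n θ x
  have := (hper.int_mul k) θ
  simpa using this

lemma fibIter_x_one (hFx : ∀ θ x : ℝ, F θ (x + 1) = F θ x + 1) :
    ∀ (n : ℕ) (θ x : ℝ), fibIter F ω θ n (x + 1) = fibIter F ω θ n x + 1 := by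
  intro n
  induction n with
  | zero => intro θ x; rfl
  | succ n ih =>
    intro θ x
    show F (θ + n * ω) (fibIter F ω θ n (x + 1)) = F (θ + n * ω) (fibIter F ω θ n x) + 1
    rw [ih, hFx]

lemma fibIter_x_int (hFx : ∀ θ x : ℝ, F θ (x + 1) = F θ x + 1)
    (n : ℕ) (θ x : ℝ) (k : ℤ) : fibIter F ω θ n (x + k) = fibIter F ω θ n x + k := by
  have hper : Function.Periodic (fun x => fibIter F ω θ n x - x) 1 := fun y => by
    simp only [fibIter_x_one (ω := ω) hFx n θ y]; ring
  have h := (hper.int_mul k) x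
  have h' : fibIter F ω θ n (x + (k:ℝ) * 1) - (x + (k:ℝ) * 1) = fibIter F ω θ n x - x := by
    simpa using h
  rw [show (k:ℝ) * 1 = (k:ℝ) by ring] at h'
  linarith

lemma fibIter_mono (hFm : ∀ θ : ℝ, StrictMono (F θ)) (n : ℕ) (θ : ℝ) :
    Monotone (fibIter F ω θ n) := by
  induction n with
  | zero => exact monotone_id
  | succ n ih =>
    intro a b hab
    exact ((hFm _).monotone (ih hab))

lemma fibIter_cont (hFc : Continuous fun p : ℝ × ℝ => F p.1 p.2) (n : ℕ) (x : ℝ) :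
    Continuous (fun θ => fibIter F ω θ n x) := by
  induction n with
  | zero => exact continuous_const
  | succ n ih =>
    show Continuous fun θ => F (θ + n * ω) (fibIter F ω θ n x)
    exact hFc.comp ((continuous_id.add continuous_const).prodMk ih)

lemma fibIter_cocycle (m : ℕ) :
    ∀ (n : ℕ) (θ x : ℝ),
      fibIter F ω θ (m + n) x = fibIter F ω (θ + m * ω) n (fibIter F ω θ m x) := by
  intro n
  induction n with
  | zero => intro θ x; rfl
  | succ n ih =>
    intro θ x
    show F (θ + ((m + n : ℕ) : ℝ) * ω) (fibIter F ω θ (m + n) x) =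
      F (θ + m * ω + n * ω) (fibIter F ω (θ + m * ω) n (fibIter F ω θ m x))
    rw [ih, show θ + ((m + n : ℕ) : ℝ) * ω = θ + m * ω + n * ω by push_cast; ring]

/-- Fibre transfer: a deviation bound at one point in a fibre gives one at all points. -/
lemma fibre_transfer (hFm : ∀ θ : ℝ, StrictMono (F θ))
    (hFx : ∀ θ x : ℝ, F θ (x + 1) = F θ x + 1)
    {θ y ρ D : ℝ} {n : ℕ} (hy : |fibIter F ω θ n y - y - n * ρ| ≤ D) (x : ℝ) :
    |fibIter F ω θ n x - x - n * ρ| ≤ D + 1 := by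
  obtain ⟨h1, h2⟩ := abs_le.mp hy
  set j : ℤ := ⌈x - y⌉ with hj
  have hle : x ≤ y + j := by
    have := Int.le_ceil (x - y); linarith
  have hlt : (j : ℝ) < x - y + 1 := by
    have := Int.ceil_lt_add_one (x - y); linarith
  have hup : fibIter F ω θ n x ≤ fibIter F ω θ n y + j :=
    (fibIter_x_int (ω := ω) hFx n θ y j) ▸ fibIter_mono (ω := ω) hFm n θ hle
  have hdown : fibIter F ω θ n y + (j - 1 : ℤ) ≤ fibIter F ω θ n x := by
    have h' : y + ((j : ℝ) - 1) ≤ x := by linarith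
    have := fibIter_mono (ω := ω) hFm n θ h'
    rw [show y + ((j:ℝ) - 1) = y + ((j - 1 : ℤ) : ℝ) by push_cast; ring,
      fibIter_x_int (ω := ω) hFx n θ y (j - 1)] at this
    exact this
  rw [abs_le]
  push_cast at hup hdown
  constructor <;> nlinarith

end aux

/-- Reaching an interval `[A, A + h)` by steps of size `h > 0` starting at `θ₀ ≤ A`. -/
lemma reach_interval (θ₀ h A : ℝ) (hpos : 0 < h) (hA : θ₀ ≤ A) :
    ∃ p : ℕ, A ≤ θ₀ + p * h ∧ θ₀ + p * h < A + h := by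
  have hex : ∃ p : ℕ, A ≤ θ₀ + p * h := by
    obtain ⟨p, hp⟩ := exists_nat_ge ((A - θ₀) / h)
    exact ⟨p, by rw [div_le_iff₀ hpos] at hp; linarith⟩
  classical
  set p := Nat.find hex with hp
  have h1 : A ≤ θ₀ + p * h := Nat.find_spec hex
  refine ⟨p, h1, ?_⟩
  rcases Nat.eq_zero_or_pos p with h0 | h0
  · rw [h0]; push_cast; linarith
  · have := Nat.find_min hex (m := p - 1) (by omega)
    push_neg at this
    have hcast : ((p - 1 : ℕ) : ℝ) = (p : ℝ) - 1 := by
      have : 1 ≤ p := h0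
      push_cast [Nat.cast_sub this]; ring
    rw [hcast] at this
    nlinarith

/-- if one orbit is `ρ`-bounded then all orbits are, with a uniform
constant. -/
theorem rho_bounded_uniform
    (F : ℝ → ℝ → ℝ) (ω : ℝ) (hirr : Irrational ω)
    (hFc : Continuous fun p : ℝ × ℝ => F p.1 p.2)
    (hFm : ∀ θ : ℝ, StrictMono (F θ))
    (hFs : ∀ θ : ℝ, Function.Surjective (F θ))
    (hFx : ∀ θ x : ℝ, F θ (x + 1) = F θ x + 1)
    (hFθ : ∀ θ x : ℝ, F (θ + 1) x = F θ x)
    (T : AddCircle (1:ℝ) × AddCircle (1:ℝ) → AddCircle (1:ℝ) × AddCircle (1:ℝ))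
    (hproj : ∀ θ x : ℝ,
      T ((θ : AddCircle (1:ℝ)), (x : AddCircle (1:ℝ))) =
        (((θ + ω : ℝ) : AddCircle (1:ℝ)), ((F θ x : ℝ) : AddCircle (1:ℝ))))
    (ρ : ℝ)
    (hρ : ∀ θ x : ℝ, Tendsto (fun n : ℕ => (fibIter F ω θ n x - x) / n) atTop (nhds ρ))
    (hone : ∃ (θ₀ x₀ : ℝ) (C : ℝ), ∀ n : ℕ,
      |fibIter F ω θ₀ n x₀ - x₀ - n * ρ| ≤ C) :
    ∃ C' : ℝ, ∀ (θ x : ℝ) (n : ℕ), |fibIter F ω θ n x - x - n * ρ| ≤ C' := by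
  obtain ⟨θ₀, x₀, C, hC⟩ := hone
  refine ⟨2 * C + 1, ?_⟩
  -- Step 1: deviation bound of `2*C` at the points of the special orbit.
  have horb : ∀ m n : ℕ,
      |fibIter F ω (θ₀ + m * ω) n (fibIter F ω θ₀ m x₀) -
        fibIter F ω θ₀ m x₀ - n * ρ| ≤ 2 * C := by
    intro m n
    have hco := fibIter_cocycle (F := F) (ω := ω) m n θ₀ x₀
    have h1 := hC (m + n)
    have h2 := hC m
    rw [hco] at h1
    have : fibIter F ω (θ₀ + m * ω) n (fibIter F ω θ₀ m x₀) -
        fibIter F ω θ₀ m x₀ - n * ρ =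
        (fibIter F ω (θ₀ + m * ω) n (fibIter F ω θ₀ m x₀) - x₀ - ((m + n : ℕ) : ℝ) * ρ) -
        (fibIter F ω θ₀ m x₀ - x₀ - m * ρ) := by push_cast; ring
    rw [this]
    calc _ ≤ |fibIter F ω (θ₀ + m * ω) n (fibIter F ω θ₀ m x₀) - x₀ - ((m + n : ℕ) : ℝ) * ρ|
            + |fibIter F ω θ₀ m x₀ - x₀ - m * ρ| := abs_sub _ _
    _ ≤ 2 * C := by linarith
  -- Step 2: the set of good base points is closed and contains the orbit + ℤ.
  set S : Set ℝ := {θ | ∀ (x : ℝ) (n : ℕ), |fibIter F ω θ n x - x - n * ρ| ≤ 2 * C + 1}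
    with hS
  have hSclosed : IsClosed S := by
    have : S = ⋂ (x : ℝ) (n : ℕ),
        {θ | |fibIter F ω θ n x - x - n * ρ| ≤ 2 * C + 1} := by
      ext θ; simp [hS]
    rw [this]
    refine isClosed_iInter fun x => isClosed_iInter fun n => ?_
    exact isClosed_le (((fibIter_cont (ω := ω) hFc n x).sub continuous_const).sub
      continuous_const).abs continuous_const
  have hSorb : ∀ (m : ℕ) (k : ℤ), θ₀ + m * ω + k ∈ S := by
    intro m k x n
    rw [fibIter_theta_int (ω := ω) hFθ n (θ₀ + m * ω) x k]
    exact fibre_transfer (ω := ω) hFm hFx (horb m n) x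
  -- Step 3: the orbit + ℤ is dense, so `S = univ`.
  have hdense : ∀ θ : ℝ, θ ∈ S := by
    intro θ
    rw [← hSclosed.closure_eq, Metric.mem_closure_iff]
    intro ε hε
    -- find `g = k*ω - j` with `k : ℤ`, `k > 0`, `0 < |g| < ε`
    obtain ⟨N, hN⟩ := exists_nat_gt (1 / ε)
    have hN0 : 0 < N := by
      rcases Nat.eq_zero_or_pos N with h0 | h0
      · exfalso; rw [h0] at hN; simp at hN; nlinarith [one_div_pos.mpr hε]
      · exact h0
    obtain ⟨j, k, hk0, hkN, hjk⟩ := Real.exists_int_int_abs_mul_sub_le ω hN0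
    set g : ℝ := k * ω - j with hg
    have hkR : ((k:ℝ)) ≠ 0 := by exact_mod_cast hk0.ne'
    have hgne : g ≠ 0 := by
      intro h
      have hωeq : ω = (j:ℝ) / (k:ℝ) := by
        rw [eq_div_iff hkR]; rw [hg] at h; linarith
      exact hirr ⟨(j : ℚ) / (k : ℚ), by push_cast; exact hωeq.symm⟩
    have hglt : |g| < ε := by
      have h1 : (1 : ℝ) / (N + 1) < ε := by
        rw [div_lt_iff₀ (by positivity)]
        rw [div_lt_iff₀ hε] at hN
        nlinarith
      linarith [hjk]
    have hnn : ∀ p : ℕ, (0:ℤ) ≤ (p:ℤ) * k := fun p =>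
      mul_nonneg (Int.ofNat_nonneg p) hk0.le
    have hcast : ∀ p : ℕ, ((((p:ℤ) * k).toNat : ℕ) : ℝ) = (p:ℝ) * (k:ℝ) := by
      intro p
      rw [← Int.cast_natCast, Int.toNat_of_nonneg (hnn p)]
      push_cast; ring
    rcases lt_or_gt_of_ne hgne with hneg | hpos
    · -- g < 0
      set K : ℤ := ⌊θ₀ - θ⌋ with hK
      have hKle : θ + K ≤ θ₀ := by
        have := Int.floor_le (θ₀ - θ); linarith
      obtain ⟨p, hp1, hp2⟩ := reach_interval (-θ₀) (-g) (-(θ + K)) (by linarith) (by linarith)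
      have hmem := hSorb ((p:ℤ) * k).toNat (-((p:ℤ) * j) - K)
      refine ⟨_, hmem, ?_⟩
      rw [Real.dist_eq, abs_lt]
      rw [hcast p]
      push_cast
      have hε' : -g < ε := by
        rw [abs_of_neg hneg] at hglt; exact hglt
      constructor <;> nlinarith [hp1, hp2]
    · -- g > 0
      set K : ℤ := ⌈θ₀ - θ⌉ with hK
      have hKle : θ₀ ≤ θ + K := by
        have := Int.le_ceil (θ₀ - θ); linarith
      obtain ⟨p, hp1, hp2⟩ := reach_interval θ₀ g (θ + K) hpos hKle
      have hmem := hSorb ((p:ℤ) * k).toNat (-((p:ℤ) * j) - K)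
      refine ⟨_, hmem, ?_⟩
      rw [Real.dist_eq, abs_lt]
      rw [hcast p]
      push_cast
      have hε' : g < ε := by
        rw [abs_of_pos hpos] at hglt; exact hglt
      constructor <;> nlinarith [hp1, hp2]
  intro θ x n
  exact hdense θ x n
end
end

section
/- Let T ∈ 𝒯_hom be irregular (no orbit of a lift T̂ is ρ_T-bounded). Then there exists at least one orbit which is ρ_T-bounded above and at least one orbit which is ρ_T-bounded below; moreover for a residual set of θ ∈ 𝕋¹, every orbit on the fibre {θ} × 𝕋¹ is ρ_T-unbounded both above and below. -/
/-!
The deviation `dₙ(θ, x) = T̂ⁿ_θ(x) - x - nρ` is a continuous cocycle over the lift `T̂`, periodic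
in `θ` and `x`, and by monotonicity it changes by at most `1` when `x` moves within a fibre.
As `dₙ(0, 0) = o(n)`, compactness of a fundamental domain gives a point where `dₙ ≤ 0` for all `n`:
otherwise every point would reach `dₙ ≥ ε` within a bounded time `N`, and iterating forces
`dₙ(0, 0) ≥ nε / N` infinitely often. The same argument for `-dₙ` gives an orbit bounded below.

Boundedness above of the orbits over `θ` does not depend on the orbit, is invariant under
`θ ↦ θ + ω`, and is a countable union of closed conditions on `θ`. By irregularity it fails over
the base point of the orbit bounded below, hence along its dense `ω`-orbit, so it fails on a dense
`G_δ` set of the circle; likewise for boundedness below.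
-/

open Set Filter Topology

noncomputable section

section Cocycle

variable {X : Type*} {f : X → X} {b : ℕ → X → ℝ}

theorem cocycle_apply_zero (hb : ∀ m n x, b (m + n) x = b m x + b n (f^[m] x)) (x : X) :
    b 0 x = 0 := by
  simpa using hb 0 0 x

theorem exists_le_cocycle_of_forall_exists_le (hb : ∀ m n x, b (m + n) x = b m x + b n (f^[m] x))
    {N : ℕ} {ε : ℝ} (hesc : ∀ x, ∃ k, 1 ≤ k ∧ k ≤ N ∧ ε ≤ b k x) (j : ℕ) (x : X) :
    ∃ t, j ≤ t ∧ t ≤ j * N ∧ j * ε ≤ b t x := by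
  induction j generalizing x with
  | zero => exact ⟨0, le_rfl, by simp, by simp [cocycle_apply_zero hb]⟩
  | succ j ih =>
    obtain ⟨k, hk, hkN, hεk⟩ := hesc x
    obtain ⟨t, hjt, htN, hεt⟩ := ih (f^[k] x)
    refine ⟨k + t, by omega, by rw [Nat.succ_mul]; omega, ?_⟩
    rw [hb]
    push_cast
    linarith

theorem not_forall_exists_le_cocycle_of_tendsto
    (hb : ∀ m n x, b (m + n) x = b m x + b n (f^[m] x)) {x₀ : X}
    (hx₀ : Tendsto (fun n : ℕ => b n x₀ / n) atTop (𝓝 0)) {N : ℕ} {ε : ℝ} (hε : 0 < ε) :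
    ¬∀ x, ∃ k, 1 ≤ k ∧ k ≤ N ∧ ε ≤ b k x := by
  intro hesc
  obtain ⟨k, hk, hkN, -⟩ := hesc x₀
  have hN : (0 : ℝ) < N := by exact_mod_cast (by omega : 0 < N)
  obtain ⟨M, hM⟩ := eventually_atTop.1 (hx₀.eventually (gt_mem_nhds (div_pos hε hN)))
  obtain ⟨t, hMt, htN, hεt⟩ := exists_le_cocycle_of_forall_exists_le hb hesc (M + 1) x₀
  have ht : (0 : ℝ) < t := by exact_mod_cast (by omega : 0 < t)
  have hlt := (div_lt_iff₀ ht).1 (hM t (by omega))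
  have hle : ε / N * t ≤ (M + 1 : ℕ) * ε :=
    calc ε / N * t ≤ ε / N * ((M + 1 : ℕ) * N) := by gcongr; exact_mod_cast htN
      _ = (M + 1 : ℕ) * ε := by field_simp
  linarith

theorem IsCompact.exists_pos_forall_exists_le [TopologicalSpace X] {K : Set X} (hK : IsCompact K)
    (hne : K.Nonempty) (hcont : ∀ n, Continuous (b n)) {N : ℕ}
    (hpos : ∀ x ∈ K, ∃ k ≤ N, 0 < b k x) : ∃ ε > 0, ∀ x ∈ K, ∃ k ≤ N, ε ≤ b k x := by
  let g : X → ℝ := fun x => (Finset.range (N + 1)).sup' Finset.nonempty_range_add_one fun k => b k x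
  have hg : Continuous g := Continuous.finset_sup'_apply _ fun k _ => hcont k
  have hle : ∀ {ε x}, ε ≤ g x ↔ ∃ k ≤ N, ε ≤ b k x := by
    simp [g, Finset.le_sup'_iff]
  obtain ⟨x₁, hx₁, hmin⟩ := hK.exists_isMinOn hne hg.continuousOn
  obtain ⟨k, hk, hk₁⟩ := hpos x₁ hx₁
  exact ⟨g x₁, hk₁.trans_le (hle.2 ⟨k, hk, le_rfl⟩), fun x hx => hle.1 (hmin hx)⟩

theorem exists_forall_cocycle_nonpos [TopologicalSpace X] {K : Set X} (hK : IsCompact K)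
    (hcont : ∀ n, Continuous (b n)) (hb : ∀ m n x, b (m + n) x = b m x + b n (f^[m] x))
    (hKb : ∀ x, ∃ y ∈ K, ∀ n, b n y = b n x) {x₀ : X}
    (hx₀ : Tendsto (fun n : ℕ => b n x₀ / n) atTop (𝓝 0)) :
    ∃ x, ∀ n, b n x ≤ 0 := by
  have hfin : ∀ N, ∃ x ∈ K, ∀ k ≤ N, b k x ≤ 0 := by
    intro N
    by_contra! hpos
    obtain ⟨y₀, hy₀, -⟩ := hKb x₀
    obtain ⟨ε, hε, hεK⟩ := hK.exists_pos_forall_exists_le ⟨y₀, hy₀⟩ hcont hpos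
    refine not_forall_exists_le_cocycle_of_tendsto hb hx₀ (N := N) hε fun x => ?_
    obtain ⟨y, hy, hyx⟩ := hKb x
    obtain ⟨k, hkN, hεk⟩ := hεK y hy
    have hk : k ≠ 0 := by
      rintro rfl
      linarith [cocycle_apply_zero hb y]
    exact ⟨k, Nat.one_le_iff_ne_zero.2 hk, hkN, hyx k ▸ hεk⟩
  obtain ⟨x, -, hx⟩ := hK.inter_iInter_nonempty (fun n => {x | b n x ≤ 0})
    (fun n => isClosed_le (hcont n) continuous_const) fun u => by
      obtain ⟨x, hxK, hx⟩ := hfin (u.sup id)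
      exact ⟨x, hxK, mem_iInter₂.2 fun k hk => hx k (Finset.le_sup (f := id) hk)⟩
  exact ⟨x, fun n => mem_iInter.1 hx n⟩

end Cocycle

section BddAbove

variable {ι α : Type*}

theorem bddAbove_range_iff_of_abs_sub_le [AddCommGroup α] [LinearOrder α] [IsOrderedAddMonoid α]
    {a a' : ι → α} {c : α} (h : ∀ i, |a i - a' i| ≤ c) :
    BddAbove (range a) ↔ BddAbove (range a') := by
  have key : ∀ {a a' : ι → α}, (∀ i, |a i - a' i| ≤ c) → BddAbove (range a) →
      BddAbove (range a') := by
    rintro a a' h ⟨C, hC⟩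
    refine ⟨C + c, forall_mem_range.2 fun i => ?_⟩
    have h₁ : a' i - a i ≤ c := (abs_sub_le_iff.1 (h i)).2
    calc a' i = a i + (a' i - a i) := by abel
      _ ≤ C + c := add_le_add (hC (mem_range_self i)) h₁
  exact ⟨key h, key fun i => abs_sub_comm (a i) (a' i) ▸ h i⟩

theorem bddAbove_range_comp_succ_iff [SemilatticeSup α] {a : ℕ → α} :
    BddAbove (range (a ∘ Nat.succ)) ↔ BddAbove (range a) := by
  rw [← Nat.range_of_succ a, bddAbove_union]
  simp

theorem bddAbove_range_iff_exists_natCast_le {a : ι → ℝ} :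
    BddAbove (range a) ↔ ∃ C : ℕ, ∀ i, a i ≤ C := by
  refine ⟨fun ⟨C, hC⟩ => ?_, fun ⟨C, hC⟩ => ⟨C, forall_mem_range.2 hC⟩⟩
  obtain ⟨N, hN⟩ := exists_nat_ge C
  exact ⟨N, fun i => (hC (mem_range_self i)).trans hN⟩

end BddAbove

theorem AddCircle.compl_image_mem_residual_of_irrational {p ω : ℝ} (hω : Irrational (ω / p))
    {P : ℝ → Prop} (hPω : Function.Periodic P ω) (S : ℕ → Set ℝ) (hS : ∀ C, IsClosed (S C))
    (hSp : ∀ C, Function.Periodic (· ∈ S C) p) (hPS : ∀ θ, P θ ↔ ∃ C, θ ∈ S C)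
    {θ₀ : ℝ} (hθ₀ : ¬P θ₀) :
    (((↑) : ℝ → AddCircle p) '' {θ | P θ})ᶜ ∈ residual (AddCircle p) := by
  have hdense : DenseRange fun k : ℤ => (θ₀ : AddCircle p) + k • (ω : AddCircle p) :=
    (Homeomorph.addLeft (θ₀ : AddCircle p)).surjective.denseRange.comp
      (AddCircle.denseRange_zsmul_coe_iff.2 hω) (Homeomorph.addLeft _).continuous
  have hres : ∀ C, ((↑) : ℝ → AddCircle p) '' (S C)ᶜ ∈ residual (AddCircle p) := by
    intro C
    refine residual_of_dense_open (QuotientAddGroup.isOpenMap_coe _ (hS C).isOpen_compl)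
      (hdense.mono ?_)
    rintro _ ⟨k, rfl⟩
    refine ⟨θ₀ + k • ω, fun h => hθ₀ ?_, by simp⟩
    exact hPω.zsmul k θ₀ ▸ (hPS _).2 ⟨C, h⟩
  filter_upwards [countable_iInter_mem.2 hres] with ϑ hϑ
  rintro ⟨θ, hθ, rfl⟩
  obtain ⟨C, hC⟩ := (hPS θ).1 hθ
  obtain ⟨θ', hθ', hθ'θ⟩ := mem_iInter.1 hϑ C
  obtain ⟨m, hm⟩ := (AddCircle.coe_eq_zero_iff p).1
    (by rw [AddCircle.coe_sub, hθ'θ, sub_self] : ((θ - θ' : ℝ) : AddCircle p) = 0)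
  have hθθ' : θ = θ' + m • p := by rw [hm, add_sub_cancel]
  exact hθ' ((hSp C).zsmul m θ' ▸ hθθ' ▸ hC)

def skewLift (F : ℝ → ℝ → ℝ) (ω : ℝ) (p : ℝ × ℝ) : ℝ × ℝ := (p.1 + ω, F p.1 p.2)

def deviation (F : ℝ → ℝ → ℝ) (ω ρ : ℝ) (n : ℕ) (θ x : ℝ) : ℝ :=
  fibIter F ω θ n x - x - n * ρ

section SkewProduct

variable {F : ℝ → ℝ → ℝ} {ω ρ : ℝ}

theorem skewLift_iterate (n : ℕ) (θ x : ℝ) :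
    (skewLift F ω)^[n] (θ, x) = (θ + n * ω, fibIter F ω θ n x) := by
  induction n with
  | zero => simp [fibIter]
  | succ n ih =>
    rw [Function.iterate_succ_apply', ih, skewLift, fibIter]
    push_cast
    ring_nf

theorem fibIter_add (m n : ℕ) (θ x : ℝ) :
    fibIter F ω θ (m + n) x = fibIter F ω (θ + m * ω) n (fibIter F ω θ m x) := by
  simpa [skewLift_iterate, add_comm m n] using
    congrArg Prod.snd (Function.iterate_add_apply (skewLift F ω) n m (θ, x))

theorem continuous_fibIter (hFc : Continuous fun p : ℝ × ℝ => F p.1 p.2) (n : ℕ) :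
    Continuous fun p : ℝ × ℝ => fibIter F ω p.1 n p.2 := by
  induction n with
  | zero => exact continuous_snd
  | succ n ih => exact hFc.comp ((continuous_fst.add continuous_const).prodMk ih)

theorem monotone_fibIter (hFm : ∀ θ, Monotone (F θ)) (θ : ℝ) (n : ℕ) :
    Monotone (fibIter F ω θ n) := by
  induction n with
  | zero => exact monotone_id
  | succ n ih => exact (hFm _).comp ih

theorem fibIter_add_one (hFx : ∀ θ x, F θ (x + 1) = F θ x + 1) (θ x : ℝ) (n : ℕ) :
    fibIter F ω θ n (x + 1) = fibIter F ω θ n x + 1 := by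
  induction n with
  | zero => rfl
  | succ n ih => rw [fibIter, fibIter, ih, hFx]

theorem periodic_fibIter (hFθ : ∀ θ x, F (θ + 1) x = F θ x) (n : ℕ) (x : ℝ) :
    Function.Periodic (fun θ => fibIter F ω θ n x) 1 := by
  intro θ
  induction n with
  | zero => rfl
  | succ n ih =>
    simp only [fibIter] at ih ⊢
    rw [ih, add_right_comm, hFθ]

theorem deviation_add (m n : ℕ) (θ x : ℝ) :
    deviation F ω ρ (m + n) θ x =
      deviation F ω ρ m θ x + deviation F ω ρ n (θ + m * ω) (fibIter F ω θ m x) := by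
  simp only [deviation, fibIter_add]
  push_cast
  ring

theorem continuous_deviation (hFc : Continuous fun p : ℝ × ℝ => F p.1 p.2) (n : ℕ) :
    Continuous fun p : ℝ × ℝ => deviation F ω ρ n p.1 p.2 :=
  ((continuous_fibIter hFc n).sub continuous_snd).sub continuous_const

theorem periodic_deviation_base (hFθ : ∀ θ x, F (θ + 1) x = F θ x) (n : ℕ) (x : ℝ) :
    Function.Periodic (fun θ => deviation F ω ρ n θ x) 1 := fun θ => by
  simp only [deviation, periodic_fibIter hFθ n x θ]

theorem periodic_deviation_fibre (hFx : ∀ θ x, F θ (x + 1) = F θ x + 1) (n : ℕ) (θ : ℝ) :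
    Function.Periodic (deviation F ω ρ n θ) 1 := fun x => by
  simp only [deviation, fibIter_add_one hFx]
  ring

theorem deviation_fract_fract (hFx : ∀ θ x, F θ (x + 1) = F θ x + 1)
    (hFθ : ∀ θ x, F (θ + 1) x = F θ x) (n : ℕ) (θ x : ℝ) :
    deviation F ω ρ n (Int.fract θ) (Int.fract x) = deviation F ω ρ n θ x := by
  have hx := (periodic_deviation_fibre (ω := ω) (ρ := ρ) hFx n (Int.fract θ)).sub_int_mul_eq
    (x := x) ⌊x⌋
  have hθ := (periodic_deviation_base (ω := ω) (ρ := ρ) hFθ n x).sub_int_mul_eq (x := θ) ⌊θ⌋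
  simp only [mul_one, Int.self_sub_floor] at hx hθ
  rw [hx, hθ]

theorem deviation_le_add_one (hFm : ∀ θ, Monotone (F θ)) (hFx : ∀ θ x, F θ (x + 1) = F θ x + 1)
    (n : ℕ) (θ x y : ℝ) : deviation F ω ρ n θ y ≤ deviation F ω ρ n θ x + 1 := by
  rw [← (periodic_deviation_fibre hFx n θ).sub_int_mul_eq ⌊y - x⌋]
  have h₁ : x ≤ y - ⌊y - x⌋ * 1 := by linarith [Int.floor_le (y - x)]
  have h₂ : y - ⌊y - x⌋ * 1 ≤ x + 1 := by linarith [Int.lt_floor_add_one (y - x)]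
  have h₃ := monotone_fibIter (ω := ω) hFm θ n h₂
  rw [fibIter_add_one hFx] at h₃
  simp only [deviation]
  linarith

theorem tendsto_deviation_div {θ x : ℝ}
    (h : Tendsto (fun n : ℕ => (fibIter F ω θ n x - x) / n) atTop (𝓝 ρ)) :
    Tendsto (fun n : ℕ => deviation F ω ρ n θ x / n) atTop (𝓝 0) := by
  refine (sub_self ρ ▸ h.sub_const ρ).congr' ?_
  filter_upwards [eventually_ne_atTop 0] with n hn
  simp [deviation, sub_div, hn]

theorem exists_forall_mul_deviation_nonpos (hFc : Continuous fun p : ℝ × ℝ => F p.1 p.2)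
    (hFx : ∀ θ x, F θ (x + 1) = F θ x + 1) (hFθ : ∀ θ x, F (θ + 1) x = F θ x)
    (hlim : Tendsto (fun n : ℕ => deviation F ω ρ n 0 0 / n) atTop (𝓝 0)) (s : ℝ) :
    ∃ θ x, ∀ n, s * deviation F ω ρ n θ x ≤ 0 := by
  have hfract (t : ℝ) : Int.fract t ∈ Icc (0 : ℝ) 1 := ⟨Int.fract_nonneg t, (Int.fract_lt_one t).le⟩
  obtain ⟨p, hp⟩ := exists_forall_cocycle_nonpos (f := skewLift F ω)
    (b := fun n p => s * deviation F ω ρ n p.1 p.2) (x₀ := (0, 0))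
    (isCompact_Icc.prod isCompact_Icc) (fun n => continuous_const.mul (continuous_deviation hFc n))
    (fun m n ⟨θ, x⟩ => by simp only [skewLift_iterate, deviation_add, mul_add])
    (fun p => ⟨(Int.fract p.1, Int.fract p.2), ⟨hfract _, hfract _⟩,
      fun n => by simp only [deviation_fract_fract hFx hFθ]⟩)
    (by simpa [mul_div_assoc] using hlim.const_mul s)
  exact ⟨p.1, p.2, hp⟩

theorem bddAbove_range_mul_deviation_iff (hFm : ∀ θ, Monotone (F θ))
    (hFx : ∀ θ x, F θ (x + 1) = F θ x + 1) (s θ x y : ℝ) :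
    BddAbove (range fun n => s * deviation F ω ρ n θ x) ↔
      BddAbove (range fun n => s * deviation F ω ρ n θ y) :=
  bddAbove_range_iff_of_abs_sub_le (c := |s|) fun n => by
    rw [← mul_sub, abs_mul]
    exact mul_le_of_le_one_right (abs_nonneg s) (abs_sub_le_iff.2
      ⟨by linarith [deviation_le_add_one (ω := ω) (ρ := ρ) hFm hFx n θ y x],
        by linarith [deviation_le_add_one (ω := ω) (ρ := ρ) hFm hFx n θ x y]⟩)

theorem bddAbove_range_mul_deviation_add_iff (hFm : ∀ θ, Monotone (F θ))
    (hFx : ∀ θ x, F θ (x + 1) = F θ x + 1) (s θ x : ℝ) :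
    BddAbove (range fun n => s * deviation F ω ρ n (θ + ω) x) ↔
      BddAbove (range fun n => s * deviation F ω ρ n θ x) := by
  rw [bddAbove_range_mul_deviation_iff hFm hFx s (θ + ω) x (fibIter F ω θ 1 x)]
  refine (bddAbove_range_iff_of_abs_sub_le (c := |s * deviation F ω ρ 1 θ x|)
    fun n => le_of_eq ?_).trans bddAbove_range_comp_succ_iff
  rw [Function.comp_apply, Nat.succ_eq_one_add, deviation_add 1 n, Nat.cast_one, one_mul, mul_add,
    sub_add_cancel_right, abs_neg]

theorem residual_forall_not_bddAbove_range_mul_deviation (hirr : Irrational ω)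
    (hFc : Continuous fun p : ℝ × ℝ => F p.1 p.2) (hFm : ∀ θ, Monotone (F θ))
    (hFx : ∀ θ x, F θ (x + 1) = F θ x + 1) (hFθ : ∀ θ x, F (θ + 1) x = F θ x) (s : ℝ)
    {θ₀ x₀ : ℝ} (h₀ : ¬BddAbove (range fun n => s * deviation F ω ρ n θ₀ x₀)) :
    {ϑ : AddCircle (1 : ℝ) | ∀ θ : ℝ, (θ : AddCircle (1 : ℝ)) = ϑ → ∀ x,
      ¬BddAbove (range fun n => s * deviation F ω ρ n θ x)} ∈ residual (AddCircle (1 : ℝ)) := by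
  let P (θ : ℝ) : Prop := BddAbove (range fun n => s * deviation F ω ρ n θ 0)
  let S (C : ℕ) : Set ℝ := ⋂ n, {θ | s * deviation F ω ρ n θ 0 ≤ C}
  have hPω : Function.Periodic P ω := fun θ =>
    propext (bddAbove_range_mul_deviation_add_iff hFm hFx s θ 0)
  have hS (C : ℕ) : IsClosed (S C) := isClosed_iInter fun n => isClosed_le
    (continuous_const.mul ((continuous_deviation hFc n).comp
      (continuous_id.prodMk continuous_const))) continuous_const
  have hS₁ (C : ℕ) : Function.Periodic (· ∈ S C) 1 := fun θ => by
    simp only [S, mem_iInter, mem_ofPred_eq, periodic_deviation_base hFθ _ 0 θ]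
  have hPS (θ : ℝ) : P θ ↔ ∃ C, θ ∈ S C := by
    simp only [P, S, bddAbove_range_iff_exists_natCast_le, mem_iInter, mem_ofPred_eq]
  have hx (θ x : ℝ) : BddAbove (range fun n => s * deviation F ω ρ n θ x) ↔ P θ :=
    bddAbove_range_mul_deviation_iff hFm hFx s θ x 0
  filter_upwards [AddCircle.compl_image_mem_residual_of_irrational (by rwa [div_one]) hPω S hS hS₁
    hPS ((hx θ₀ x₀).not.1 h₀)] with ϑ hϑ θ hθ x hbdd
  exact hϑ ⟨θ, (hx θ x).1 hbdd, hθ⟩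

theorem not_bddAbove_range_mul_deviation {θ x : ℝ}
    (hunb : ¬∃ C : ℝ, ∀ n : ℕ, |deviation F ω ρ n θ x| ≤ C) {s : ℝ} (hs : s ≠ 0)
    (h : ∀ n, -s * deviation F ω ρ n θ x ≤ 0) :
    ¬BddAbove (range fun n => s * deviation F ω ρ n θ x) := by
  rintro ⟨C, hC⟩
  refine hunb ⟨C / |s|, fun n => ?_⟩
  rw [le_div_iff₀ (abs_pos.2 hs), ← abs_mul, mul_comm,
    abs_of_nonneg (by linarith [h n, neg_mul s (deviation F ω ρ n θ x)])]
  exact hC (mem_range_self n)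

end SkewProduct

theorem irregular_boundedness_dichotomy_general
    (F : ℝ → ℝ → ℝ) (ω : ℝ) (hirr : Irrational ω)
    (hFc : Continuous fun p : ℝ × ℝ => F p.1 p.2)
    (hFm : ∀ θ : ℝ, StrictMono (F θ))
    (hFx : ∀ θ x : ℝ, F θ (x + 1) = F θ x + 1)
    (hFθ : ∀ θ x : ℝ, F (θ + 1) x = F θ x)
    (ρ : ℝ)
    (hρ : ∀ θ x : ℝ, Tendsto (fun n : ℕ => (fibIter F ω θ n x - x) / n) atTop (nhds ρ))
    (hirrT : ∀ θ x : ℝ, ¬∃ C : ℝ, ∀ n : ℕ, |fibIter F ω θ n x - x - n * ρ| ≤ C) :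
    (∃ (θ x C : ℝ), ∀ n : ℕ, fibIter F ω θ n x - x - n * ρ ≤ C) ∧
    (∃ (θ x C : ℝ), ∀ n : ℕ, -C ≤ fibIter F ω θ n x - x - n * ρ) ∧
    {ϑ : AddCircle (1:ℝ) | ∀ θ : ℝ, (θ : AddCircle (1:ℝ)) = ϑ → ∀ x : ℝ,
        (¬∃ C : ℝ, ∀ n : ℕ, fibIter F ω θ n x - x - n * ρ ≤ C) ∧
        (¬∃ C : ℝ, ∀ n : ℕ, -C ≤ fibIter F ω θ n x - x - n * ρ)} ∈
      residual (AddCircle (1:ℝ)) := by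
  have hFm' (θ : ℝ) : Monotone (F θ) := (hFm θ).monotone
  have hdev (n : ℕ) (θ x : ℝ) : deviation F ω ρ n θ x = fibIter F ω θ n x - x - n * ρ := rfl
  have hlim := tendsto_deviation_div (hρ 0 0)
  -- the factor `s = 1` or `s = -1` turns bounds from below into bounds from above
  obtain ⟨θ₁, x₁, h₁⟩ := exists_forall_mul_deviation_nonpos hFc hFx hFθ hlim 1
  obtain ⟨θ₂, x₂, h₂⟩ := exists_forall_mul_deviation_nonpos hFc hFx hFθ hlim (-1)
  have hup := residual_forall_not_bddAbove_range_mul_deviation hirr hFc hFm' hFx hFθ 1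
    (not_bddAbove_range_mul_deviation (hirrT θ₂ x₂) one_ne_zero h₂)
  have hdown := residual_forall_not_bddAbove_range_mul_deviation hirr hFc hFm' hFx hFθ (-1)
    (not_bddAbove_range_mul_deviation (hirrT θ₁ x₁) (neg_ne_zero.2 one_ne_zero)
      (by simpa using h₁))
  refine ⟨⟨θ₁, x₁, 0, fun n => by linarith [h₁ n, hdev n θ₁ x₁]⟩,
    ⟨θ₂, x₂, 0, fun n => by linarith [h₂ n, hdev n θ₂ x₂]⟩, ?_⟩
  filter_upwards [hup, hdown] with ϑ hϑ₁ hϑ₂ θ hθ x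
  exact ⟨fun ⟨C, hC⟩ => hϑ₁ θ hθ x ⟨C, forall_mem_range.2 fun n => by linarith [hC n, hdev n θ x]⟩,
    fun ⟨C, hC⟩ => hϑ₂ θ hθ x ⟨C, forall_mem_range.2 fun n => by linarith [hC n, hdev n θ x]⟩⟩

/-- in the irregular case there is an orbit which is `ρ`-bounded above and
one which is `ρ`-bounded below, but for a residual set of `θ` every orbit in the fibre
over `θ` is `ρ`-unbounded above and below. -/
theorem irregular_boundedness_dichotomy
    (F : ℝ → ℝ → ℝ) (ω : ℝ) (hirr : Irrational ω)
    (hFc : Continuous fun p : ℝ × ℝ => F p.1 p.2)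
    (hFm : ∀ θ : ℝ, StrictMono (F θ))
    (hFs : ∀ θ : ℝ, Function.Surjective (F θ))
    (hFx : ∀ θ x : ℝ, F θ (x + 1) = F θ x + 1)
    (hFθ : ∀ θ x : ℝ, F (θ + 1) x = F θ x)
    (T : AddCircle (1:ℝ) × AddCircle (1:ℝ) → AddCircle (1:ℝ) × AddCircle (1:ℝ))
    (hproj : ∀ θ x : ℝ,
      T ((θ : AddCircle (1:ℝ)), (x : AddCircle (1:ℝ))) =
        (((θ + ω : ℝ) : AddCircle (1:ℝ)), ((F θ x : ℝ) : AddCircle (1:ℝ))))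
    (ρ : ℝ)
    (hρ : ∀ θ x : ℝ, Tendsto (fun n : ℕ => (fibIter F ω θ n x - x) / n) atTop (nhds ρ))
    (hirrT : ∀ θ x : ℝ, ¬∃ C : ℝ, ∀ n : ℕ, |fibIter F ω θ n x - x - n * ρ| ≤ C) :
    (∃ (θ x C : ℝ), ∀ n : ℕ, fibIter F ω θ n x - x - n * ρ ≤ C) ∧
    (∃ (θ x C : ℝ), ∀ n : ℕ, -C ≤ fibIter F ω θ n x - x - n * ρ) ∧
    {ϑ : AddCircle (1:ℝ) | ∀ θ : ℝ, (θ : AddCircle (1:ℝ)) = ϑ → ∀ x : ℝ,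
        (¬∃ C : ℝ, ∀ n : ℕ, fibIter F ω θ n x - x - n * ρ ≤ C) ∧
        (¬∃ C : ℝ, ∀ n : ℕ, -C ≤ fibIter F ω θ n x - x - n * ρ)} ∈
      residual (AddCircle (1:ℝ)) :=
  irregular_boundedness_dichotomy_general F ω hirr hFc hFm hFx hFθ ρ hρ hirrT
end
end
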